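/- Let ℓ ≥ 3 be prime and let G = (ℤ/ℓ') ⋊ ⟨Φ⟩ with ℓ' = 9 if ℓ = 3 and ℓ' = ℓ if ℓ > 3, where Φ has order ℓ' and acts on ℤ/ℓ' by multiplication by 1 + ℓα for some α ∈ ℤ/ℓ' (with α = 0 if ℓ > 3). Then for every homomorphism χ: G → ℤ/ℓ there exists a group homomorphism ρ: G → U₄(ℤ/ℓ) such that for all g ∈ G, all three superdiagonal entries of ρ(g) equal χ(g). -/

import Mathlib

/-- The upper unitriangular 4×4 matrix `M(a₁,a₂,a₃,u,v,w)` over `ℤ/ℓ`. -/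
def M4 {ℓ : ℕ} (a₁ a₂ a₃ u v w : ZMod ℓ) : Matrix (Fin 4) (Fin 4) (ZMod ℓ) :=
  !![1, a₁, u, v; 0, 1, a₂, w; 0, 0, 1, a₃; 0, 0, 0, 1]

/-!
With `a = χ m` and `b = χ Φ`, take `X = M(a,a,a,0,0,0)` and `Y = M(b,b,b,0,0,-s a²)` where
`s = C(1+ℓα, 3)`. The entries of `M(b,b,b,0,0,c)^N` are binomial coefficients `C(N,k)`, `k ≤ 3`,
so `X^ℓ' = Y^ℓ' = 1` because `ℓ` divides `C(ℓ',k)`, and `X^(1+ℓα)` differs from `X` only by the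
corner entry `s a³` (as `ℓ` is odd, it divides `C(1+ℓα, 2)`), which is exactly what conjugation by `Y` adds to `X`.
As `G` has order `ℓ'²` and is generated by `m, Φ`, these relations present `G`: the subgroup of
`G × U₄(ℤ/ℓ)` generated by `(m, X)` and `(Φ, Y)` is `⟨(m, X)⟩⟨(Φ, Y)⟩`, of order at most `ℓ'²`,
and maps onto `G`, so it is the graph of a homomorphism `ρ`. Superdiagonals add under
multiplication, so those of `ρ` agree with `χ` on the generators and hence everywhere.
-/

open scoped Pointwise

section M4

variable {n : ℕ}

theorem M4_mul (a₁ a₂ a₃ u v w b₁ b₂ b₃ u' v' w' : ZMod n) :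
    M4 a₁ a₂ a₃ u v w * M4 b₁ b₂ b₃ u' v' w' =
      M4 (a₁ + b₁) (a₂ + b₂) (a₃ + b₃) (u + u' + a₁ * b₂) (v + v' + a₁ * w' + u * b₃)
        (w + w' + a₂ * b₃) := by
  ext i j
  fin_cases i <;> fin_cases j <;>
    simp [M4, Matrix.mul_apply, Fin.sum_univ_succ] <;> ring

theorem M4_zero : M4 (0 : ZMod n) 0 0 0 0 0 = 1 := by
  ext i j
  fin_cases i <;> fin_cases j <;> simp [M4]

theorem M4_pow (b c : ZMod n) (N : ℕ) :
    M4 b b b 0 0 c ^ N =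
      M4 ((N : ZMod n) * b) ((N : ZMod n) * b) ((N : ZMod n) * b) ((N.choose 2 : ZMod n) * b ^ 2)
        ((N.choose 3 : ZMod n) * b ^ 3 + (N.choose 2 : ZMod n) * b * c)
        ((N.choose 2 : ZMod n) * b ^ 2 + (N : ZMod n) * c) := by
  induction N with
  | zero => simp [← M4_zero]
  | succ N ih =>
    rw [pow_succ, ih, M4_mul, Nat.choose_succ_succ' N 2, Nat.choose_succ_succ' N 1,
      Nat.choose_one_right]
    push_cast
    ring_nf

theorem M4_pow_eq_one (b c : ZMod n) {N : ℕ} (h : ∀ k, 1 ≤ k → k ≤ 3 → n ∣ N.choose k) :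
    M4 b b b 0 0 c ^ N = 1 := by
  have h₁ : (N : ZMod n) = 0 := by
    simpa [ZMod.natCast_eq_zero_iff] using h 1 le_rfl (by norm_num)
  have h₂ : (N.choose 2 : ZMod n) = 0 :=
    (ZMod.natCast_eq_zero_iff _ _).mpr (h 2 (by norm_num) (by norm_num))
  have h₃ : (N.choose 3 : ZMod n) = 0 :=
    (ZMod.natCast_eq_zero_iff _ _).mpr (h 3 (by norm_num) le_rfl)
  rw [M4_pow, h₁, h₂, h₃, ← M4_zero]
  congr 1 <;> ring

theorem M4_semiconjBy_pow (a b : ZMod n) {N : ℕ} (h₁ : (N : ZMod n) = 1)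
    (h₂ : (N.choose 2 : ZMod n) = 0) :
    SemiconjBy (M4 b b b 0 0 (-(N.choose 3 : ZMod n) * a ^ 2)) (M4 a a a 0 0 0)
      (M4 a a a 0 0 0 ^ N) := by
  rw [SemiconjBy, M4_pow, h₁, h₂, M4_mul, M4_mul]
  congr 1 <;> ring

theorem exists_eq_M4_of_closure_eq_top {G : Type*} [Monoid G] {s : Set G}
    (hs : Submonoid.closure s = ⊤) (ρ : G →* Matrix (Fin 4) (Fin 4) (ZMod n))
    (χ : G →* Multiplicative (ZMod n))
    (h : ∀ g ∈ s, ∃ u v w : ZMod n, ρ g = M4 (χ g).toAdd (χ g).toAdd (χ g).toAdd u v w)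
    (g : G) : ∃ u v w : ZMod n, ρ g = M4 (χ g).toAdd (χ g).toAdd (χ g).toAdd u v w := by
  induction (hs ▸ Submonoid.mem_top g : g ∈ Submonoid.closure s) using
    Submonoid.closure_induction with
  | mem g hg => exact h g hg
  | one => exact ⟨0, 0, 0, by simp [M4_zero]⟩
  | mul g g' _ _ hg hg' =>
    obtain ⟨u, v, w, hρ⟩ := hg
    obtain ⟨u', v', w', hρ'⟩ := hg'
    exact ⟨_, _, _, by rw [map_mul, map_mul, hρ, hρ', M4_mul, toAdd_mul]⟩

end M4

theorem Nat.Prime.dvd_choose_two_one_add_mul {p : ℕ} (hp : p.Prime) (hp2 : p ≠ 2) (k : ℕ) :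
    p ∣ (1 + p * k).choose 2 := by
  have hdvd : p ∣ (1 + p * k).choose 2 * 2 := by
    have h := Nat.add_one_mul_choose_eq (p * k) 1
    rw [Nat.choose_one_right, add_comm (p * k) 1] at h
    exact h ▸ (dvd_mul_right p k).mul_left _
  refine (hp.dvd_mul.mp hdvd).resolve_right fun h2 => hp2 ?_
  exact (Nat.prime_dvd_prime_iff_eq hp Nat.prime_two).mp h2

-- For `ℓ = 3` the exponent has to be `9`: `3` does not divide `C(3, 3)`.
theorem Nat.Prime.dvd_choose_metacyclic_order {ℓ : ℕ} (hℓ : ℓ.Prime) (h3 : 3 ≤ ℓ) {k : ℕ}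
    (hk₁ : 1 ≤ k) (hk₃ : k ≤ 3) : ℓ ∣ (if ℓ = 3 then 9 else ℓ).choose k := by
  split_ifs with h
  · subst h
    interval_cases k <;> decide
  · exact hℓ.dvd_choose_self (by omega) (by omega)

namespace Subgroup

variable {P : Type*} [Group P]

theorem coe_closure_pair_eq_mul {x y : P} (hx : IsOfFinOrder x)
    (hxy : y * x * y⁻¹ ∈ zpowers x) :
    (closure {x, y} : Set P) = (zpowers x : Set P) * zpowers y := by
  have : Finite (zpowers x : Set P) := hx.finite_zpowers
  have hy : y ∈ normalizer (zpowers x : Set P) := by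
    refine mem_normalizer_fintype fun g hg => ?_
    obtain ⟨k, rfl⟩ := mem_zpowers_iff.mp hg
    obtain ⟨j, hj⟩ := mem_zpowers_iff.mp hxy
    rw [← conj_zpow, ← hj, ← zpow_mul]
    exact zpow_mem_zpowers x _
  rw [Set.insert_eq, closure_union, ← zpowers_eq_closure, ← zpowers_eq_closure,
    coe_mul_of_right_le_normalizer_left _ _ (zpowers_le.mpr hy)]

end Subgroup

open Subgroup in
theorem exists_monoidHom_of_metacyclic_relations {G H : Type*} [Group G] [Group H] {n r : ℕ}
    (hn : 0 < n) {m Φ : G} (hm : m ^ n = 1) (hΦ : Φ ^ n = 1) (hconj : Φ * m * Φ⁻¹ = m ^ r)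
    (hgen : closure {m, Φ} = ⊤) (hcard : Nat.card G = n ^ 2)
    {x y : H} (hx : x ^ n = 1) (hy : y ^ n = 1) (hxy : y * x * y⁻¹ = x ^ r) :
    ∃ f : G →* H, f m = x ∧ f Φ = y := by
  set K := closure {((m, x) : G × H), (Φ, y)}
  have hmK : (m, x) ∈ K := subset_closure (by simp)
  have hΦK : (Φ, y) ∈ K := subset_closure (by simp)
  have hmx : IsOfFinOrder (m, x) := isOfFinOrder_iff_pow_eq_one.mpr ⟨n, hn, Prod.ext hm hx⟩
  have hΦy : IsOfFinOrder (Φ, y) := isOfFinOrder_iff_pow_eq_one.mpr ⟨n, hn, Prod.ext hΦ hy⟩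
  have hK : (K : Set (G × H)) = (zpowers (m, x) : Set (G × H)) * zpowers (Φ, y) := by
    refine coe_closure_pair_eq_mul hmx ?_
    rw [show (Φ, y) * (m, x) * (Φ, y)⁻¹ = (m, x) ^ r from Prod.ext hconj hxy]
    exact npow_mem_zpowers _ _
  have : Finite K := by
    change Finite (K : Set (G × H))
    rw [hK]
    exact (hmx.finite_zpowers.mul hΦy.finite_zpowers).to_subtype
  let π : K →* G := (MonoidHom.fst G H).comp K.subtype
  have hπ : Function.Surjective π := by
    rw [← MonoidHom.range_eq_top, eq_top_iff, ← hgen, closure_le]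
    rintro _ (rfl | rfl)
    exacts [⟨⟨_, hmK⟩, rfl⟩, ⟨⟨_, hΦK⟩, rfl⟩]
  have hKcard : Nat.card K ≤ Nat.card G := by
    calc Nat.card K = Nat.card (K : Set (G × H)) := rfl
      _ ≤ orderOf (m, x) * orderOf (Φ, y) := by
          rw [hK, ← Nat.card_zpowers, ← Nat.card_zpowers]; exact Set.natCard_mul_le
      _ ≤ n * n := Nat.mul_le_mul (orderOf_le_of_pow_eq_one hn (Prod.ext hm hx))
          (orderOf_le_of_pow_eq_one hn (Prod.ext hΦ hy))
      _ = Nat.card G := by rw [hcard, sq]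
  let e := MulEquiv.ofBijective π ((Nat.bijective_iff_surjective_and_card π).mpr
    ⟨hπ, le_antisymm hKcard (Nat.card_le_card_of_surjective π hπ)⟩)
  refine ⟨(MonoidHom.snd G H).comp (K.subtype.comp e.symm.toMonoidHom), ?_, ?_⟩
  · have : e.symm m = ⟨_, hmK⟩ := e.symm_apply_eq.mpr rfl
    simp [this]
  · have : e.symm Φ = ⟨_, hΦK⟩ := e.symm_apply_eq.mpr rfl
    simp [this]

theorem exists_U4_lift_of_metacyclic_general (ℓ ℓ' : ℕ) (hℓ : ℓ.Prime) (h3 : 3 ≤ ℓ)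
    (hℓ' : ℓ' = if ℓ = 3 then 9 else ℓ)
    (α : ℕ)
    (G : Type*) [Group G] (m Φ : G)
    (hm : orderOf m = ℓ') (hΦ : orderOf Φ = ℓ')
    (hconj : Φ * m * Φ⁻¹ = m ^ (1 + ℓ * α))
    (hgen : Subgroup.closure {m, Φ} = (⊤ : Subgroup G))
    (hcard : Nat.card G = ℓ' ^ 2)
    (χ : G →* Multiplicative (ZMod ℓ)) :
    ∃ ρ : G →* Matrix (Fin 4) (Fin 4) (ZMod ℓ), ∀ g : G, ∃ u v w : ZMod ℓ,
      ρ g = M4 (Multiplicative.toAdd (χ g)) (Multiplicative.toAdd (χ g))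
        (Multiplicative.toAdd (χ g)) u v w := by
  have hℓ'0 : ℓ' ≠ 0 := by rw [hℓ']; split_ifs <;> omega
  have hchoose : ∀ k, 1 ≤ k → k ≤ 3 → ℓ ∣ ℓ'.choose k :=
    fun k hk₁ hk₃ => hℓ' ▸ hℓ.dvd_choose_metacyclic_order h3 hk₁ hk₃
  set a := (χ m).toAdd
  set b := (χ Φ).toAdd
  set s : ZMod ℓ := (((1 + ℓ * α).choose 3 : ℕ) : ZMod ℓ)
  let X := Units.ofPowEqOne _ _ (M4_pow_eq_one a 0 hchoose) hℓ'0
  let Y := Units.ofPowEqOne _ _ (M4_pow_eq_one b (-s * a ^ 2) hchoose) hℓ'0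
  have hXY : Y * X * Y⁻¹ = X ^ (1 + ℓ * α) := by
    rw [mul_inv_eq_iff_eq_mul]
    exact Units.ext (M4_semiconjBy_pow a b (by simp) ((ZMod.natCast_eq_zero_iff _ _).mpr
      (hℓ.dvd_choose_two_one_add_mul (by omega) α)))
  obtain ⟨f, hfm, hfΦ⟩ := exists_monoidHom_of_metacyclic_relations (Nat.pos_of_ne_zero hℓ'0)
    (hm ▸ pow_orderOf_eq_one m) (hΦ ▸ pow_orderOf_eq_one Φ) hconj hgen (hℓ' ▸ hcard)
    (Units.pow_ofPowEqOne _ _) (Units.pow_ofPowEqOne _ _) hXY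
  have : Finite G := Nat.finite_of_card_ne_zero (hcard ▸ pow_ne_zero 2 hℓ'0)
  refine ⟨(Units.coeHom _).comp f, exists_eq_M4_of_closure_eq_top (s := {m, Φ}) ?_ _ χ ?_⟩
  · rw [← Subgroup.closure_toSubmonoid_of_finite, hgen, Subgroup.top_toSubmonoid]
  · rintro g (rfl | rfl)
    · exact ⟨0, 0, 0, by simp [hfm, a]⟩
    · exact ⟨0, 0, -s * a ^ 2, by simp [hfΦ, b]⟩

/-- let `ℓ ≥ 3` be prime and `G = (ℤ/ℓ') ⋊ ⟨Φ⟩` with `ℓ' = 9` if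
`ℓ = 3` and `ℓ' = ℓ` otherwise, where `Φ` has order `ℓ'` and acts on `ℤ/ℓ'` (with
generator `m`) by multiplication by `1 + ℓα` (with `α = 0` if `ℓ > 3`); `G` is
presented abstractly by generators `m, Φ` with these relations and `#G = ℓ'²`.
Then every homomorphism `χ : G → ℤ/ℓ` lifts to a homomorphism `ρ : G → U₄(ℤ/ℓ)`
whose three superdiagonal entries are all equal to `χ` (i.e. the triple Massey
product `⟨χ,χ,χ⟩` contains zero). -/
theorem exists_U4_lift_of_metacyclic (ℓ ℓ' : ℕ) (hℓ : ℓ.Prime) (h3 : 3 ≤ ℓ)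
    (hℓ' : ℓ' = if ℓ = 3 then 9 else ℓ)
    (α : ℕ) (hα : 3 < ℓ → α = 0)
    (G : Type*) [Group G] (m Φ : G)
    (hm : orderOf m = ℓ') (hΦ : orderOf Φ = ℓ')
    (hconj : Φ * m * Φ⁻¹ = m ^ (1 + ℓ * α))
    (hgen : Subgroup.closure {m, Φ} = (⊤ : Subgroup G))
    (hcard : Nat.card G = ℓ' ^ 2)
    (χ : G →* Multiplicative (ZMod ℓ)) :
    ∃ ρ : G →* Matrix (Fin 4) (Fin 4) (ZMod ℓ), ∀ g : G, ∃ u v w : ZMod ℓ,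
      ρ g = M4 (Multiplicative.toAdd (χ g)) (Multiplicative.toAdd (χ g))
        (Multiplicative.toAdd (χ g)) u v w :=
  exists_U4_lift_of_metacyclic_general ℓ ℓ' hℓ h3 hℓ' α G m Φ hm hΦ hconj hgen hcard χ
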